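/- arXiv:math/9405217 — 2 statements merged into one kernel-verified Lean document; each statement's English description precedes it below -/
import Mathlib

section
/- Let f_n : [0,1] → ℝ be functions with continuous k-th derivatives, and suppose there exist functions f and g on [0,1] such that f_n → f uniformly and D^k f_n → g uniformly as n → ∞. Then f is k times differentiable and D^k f = g. -/
/-!
Subtract from `F n` its Taylor polynomial `P n` of degree `< k` at `0`. The remainder `G n` has
vanishing derivatives of order `< k` at `0`, so it is the `k`-fold iterated integral of
`D^k F n`; hence it converges uniformly to the `k`-fold iterated integral `h` of (an extension of)
`g`, a `C^k` function with `D^k h = g`. Then `P n = F n - G n` converges pointwise on `[0,1]` to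
`f - h`, and a pointwise limit of polynomials of degree `< k` is again such a polynomial `q`, as
Lagrange interpolation at `k` nodes shows. So `f = h + q` on `[0,1]`.
-/

open Set Filter Polynomial Topology MeasureTheory

namespace Polynomial

section NormedField

variable {𝕜 : Type*} [NontriviallyNormedField 𝕜]

theorem contDiff_eval (p : 𝕜[X]) (n : WithTop ℕ∞) : ContDiff 𝕜 n fun x => p.eval x := by
  simpa using p.contDiff_aeval (𝕜 := 𝕜) n

theorem iteratedDeriv_eval (p : 𝕜[X]) (m : ℕ) :
    iteratedDeriv m (fun x => p.eval x) = fun x => (derivative^[m] p).eval x := by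
  induction m generalizing p with
  | zero => rfl
  | succ m ih =>
    rw [iteratedDeriv_succ', Function.iterate_succ_apply, ← ih]
    congr 1
    ext x
    exact p.deriv

theorem iteratedDeriv_eval_of_degree_lt {p : 𝕜[X]} {k : ℕ} (hp : p.degree < k) :
    iteratedDeriv k (fun x => p.eval x) = 0 := by
  rw [iteratedDeriv_eval, iterate_derivative_eq_zero_of_degree_lt hp]
  ext x
  exact eval_zero

end NormedField

theorem exists_degree_lt_eval_iterate_derivative_eq {K : Type*} [Field K] [CharZero K]
    (c : ℕ → K) (k : ℕ) (a : K) :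
    ∃ p : K[X], p.degree < k ∧ ∀ m < k, (derivative^[m] p).eval a = c m := by
  refine ⟨∑ i ∈ Finset.range k, (c i / i.factorial) • (X - C a) ^ i, ?_, fun m hm => ?_⟩
  · refine (degree_sum_le _ _).trans_lt <|
      (Finset.sup_lt_iff (WithBot.bot_lt_coe k)).2 fun i hi => (degree_smul_le _ _).trans_lt ?_
    rw [degree_pow, degree_X_sub_C, nsmul_one]
    exact Nat.cast_lt.2 (Finset.mem_range.1 hi)
  · simp only [iterate_derivative_sum, iterate_derivative_smul, iterate_derivative_X_sub_pow,
      eval_finsetSum, eval_smul, eval_pow, eval_sub, eval_X, eval_C, sub_self]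
    rw [Finset.sum_eq_single m]
    · rw [Nat.sub_self, pow_zero, Nat.descFactorial_self, nsmul_eq_mul, mul_one, smul_eq_mul,
        div_mul_cancel₀ _ (Nat.cast_ne_zero.2 m.factorial_ne_zero)]
    · intro i _ him
      rcases him.lt_or_gt with him | him
      · rw [Nat.descFactorial_eq_zero_iff_lt.2 him, zero_smul, smul_zero]
      · rw [zero_pow (Nat.sub_ne_zero_of_lt him), smul_zero, smul_zero]
    · intro hm'
      exact absurd (Finset.mem_range.2 hm) hm'

theorem exists_eqOn_eval_of_tendsto {K : Type*} [Field K] [TopologicalSpace K]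
    [IsTopologicalRing K] [T2Space K] {ι : Type*} {l : Filter ι} [l.NeBot] {P : ι → K[X]}
    {k : ℕ} (hP : ∀ i, (P i).degree < k) {s : Set K} (hs : s.Infinite) {φ : K → K}
    (hφ : ∀ x ∈ s, Tendsto (fun i => (P i).eval x) l (𝓝 (φ x))) :
    ∃ q : K[X], q.degree < k ∧ EqOn φ (fun x => q.eval x) s := by
  classical
  obtain ⟨t, hts, rfl⟩ := hs.exists_subset_card_eq k
  have heval : ∀ (r : K → K) x, (Lagrange.interpolate t id r).eval x =
      ∑ j ∈ t, r j * (Lagrange.basis t id j).eval x := by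
    intro r x
    simp only [Lagrange.interpolate_apply, eval_finsetSum, eval_mul, eval_C]
  refine ⟨Lagrange.interpolate t id φ, Lagrange.degree_interpolate_lt _ (injOn_id _),
    fun x hx => tendsto_nhds_unique (hφ x hx) ?_⟩
  have hPi : ∀ i, (P i).eval x = ∑ j ∈ t, (P i).eval j * (Lagrange.basis t id j).eval x :=
    fun i => by
      conv_lhs => rw [Lagrange.eq_interpolate (v := id) (injOn_id _) (hP i)]
      exact heval _ x
  dsimp only
  rw [heval]
  exact (tendsto_finsetSum _ fun j hj => (hφ j (hts hj)).mul_const _).congr fun i => (hPi i).symm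

end Polynomial

section IntervalIntegral

variable {E : Type*} [NormedAddCommGroup E] [NormedSpace ℝ E]

theorem TendstoUniformlyOn.intervalIntegral {ι : Type*} {l : Filter ι} {u : ι → ℝ → E}
    {v : ℝ → E} {a b : ℝ}
    (hu : ∀ i, IntervalIntegrable (u i) volume a b) (hv : IntervalIntegrable v volume a b)
    (h : TendstoUniformlyOn u v l (Icc a b)) :
    TendstoUniformlyOn (fun i x => ∫ t in a..x, u i t) (fun x => ∫ t in a..x, v t) l
      (Icc a b) := by
  rw [Metric.tendstoUniformlyOn_iff] at h ⊢
  intro ε hε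
  have hL : 0 < |b - a| + 1 := by positivity
  filter_upwards [h _ (div_pos hε hL)] with i hi x hx
  have hsub : uIcc a x ⊆ uIcc a b := uIcc_subset_uIcc_left (Icc_subset_uIcc hx)
  rw [dist_eq_norm, ← intervalIntegral.integral_sub (hv.mono_set hsub) ((hu i).mono_set hsub)]
  have hbound : ∀ t ∈ uIoc a x, ‖v t - u i t‖ ≤ ε / (|b - a| + 1) := fun t ht => by
    rw [uIoc_of_le hx.1] at ht
    exact (dist_eq_norm (v t) (u i t) ▸ hi t ⟨ht.1.le, ht.2.trans hx.2⟩).le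
  calc ‖∫ t in a..x, v t - u i t‖ ≤ ε / (|b - a| + 1) * |x - a| :=
        intervalIntegral.norm_integral_le_of_norm_le_const hbound
    _ < ε := by
      rw [abs_of_nonneg (sub_nonneg.2 hx.1), div_mul_eq_mul_div, div_lt_iff₀ hL]
      exact mul_lt_mul_of_pos_left (by linarith [hx.2, le_abs_self (b - a)]) hε

theorem ContDiff.intervalIntegral [CompleteSpace E] {n : ℕ} {h : ℝ → E}
    (hh : ContDiff ℝ n h) (a : ℝ) : ContDiff ℝ (n + 1 : ℕ) fun x => ∫ t in a..x, h t := by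
  rw [Nat.cast_add_one, contDiff_succ_iff_deriv]
  refine ⟨fun x => (hh.continuous.integral_hasStrictDerivAt a x).hasDerivAt.differentiableAt,
    by simp, ?_⟩
  rwa [funext (hh.continuous.deriv_integral h a)]

theorem iteratedDeriv_succ_intervalIntegral [CompleteSpace E] {h : ℝ → E} (hh : Continuous h)
    (n : ℕ) (a : ℝ) :
    iteratedDeriv (n + 1) (fun x => ∫ t in a..x, h t) = iteratedDeriv n h := by
  rw [iteratedDeriv_succ', funext (hh.deriv_integral h a)]

end IntervalIntegral

theorem exists_contDiff_tendstoUniformlyOn_of_iteratedDeriv {ι : Type*} {l : Filter ι} [l.NeBot]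
    {a b : ℝ} (hab : a ≤ b) (k : ℕ) {G : ι → ℝ → ℝ} {g : ℝ → ℝ}
    (hG : ∀ i, ContDiff ℝ k (G i)) (hG₀ : ∀ i, ∀ m < k, iteratedDeriv m (G i) a = 0)
    (hconv : TendstoUniformlyOn (fun i => iteratedDeriv k (G i)) g l (Icc a b)) :
    ∃ h : ℝ → ℝ, ContDiff ℝ k h ∧ TendstoUniformlyOn G h l (Icc a b) ∧
      EqOn (iteratedDeriv k h) g (Icc a b) := by
  induction k generalizing G g with
  | zero =>
    simp only [iteratedDeriv_zero] at hconv ⊢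
    have hg : ContinuousOn g (Icc a b) :=
      hconv.continuousOn (Frequently.of_forall fun i => (hG i).continuous.continuousOn)
    have hext : EqOn (IccExtend hab (domRestrict (Icc a b) g)) g (Icc a b) :=
      fun x hx => IccExtend_of_mem hab _ hx
    exact ⟨_, contDiff_zero.2 (continuous_IccExtend_iff.2 hg.domRestrict),
      hconv.congr_right hext.symm, hext⟩
  | succ k ih =>
    have hdiff : ∀ i, Differentiable ℝ (G i) := fun i => (hG i).differentiable (by simp)
    have hG' : ∀ i, ContDiff ℝ k (deriv (G i)) := fun i => by
      have := hG i
      rw [Nat.cast_add_one, contDiff_succ_iff_deriv] at this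
      exact this.2.2
    obtain ⟨h, hh, hconv', hhg⟩ := ih hG'
      (fun i m hm => by rw [← iteratedDeriv_succ']; exact hG₀ i (m + 1) (by omega))
      (by simpa only [iteratedDeriv_succ'] using hconv)
    have hG_eq : ∀ i x, ∫ t in a..x, deriv (G i) t = G i x := fun i x => by
      rw [intervalIntegral.integral_deriv_eq_sub (fun y _ => hdiff i y)
        ((hG' i).continuous.intervalIntegrable a x)]
      simpa using hG₀ i 0 k.succ_pos
    refine ⟨_, hh.intervalIntegral a, ?_, fun x hx => ?_⟩
    · refine (hconv'.intervalIntegral (fun i => (hG' i).continuous.intervalIntegrable a b)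
        (hh.continuous.intervalIntegrable a b)).congr (Eventually.of_forall fun i x _ => ?_)
      exact hG_eq i x
    · rw [iteratedDeriv_succ_intervalIntegral hh.continuous]
      exact hhg hx

theorem stmt4 (k : ℕ) (f g : ℝ → ℝ) (F : ℕ → ℝ → ℝ)
    (hF : ∀ n, ContDiff ℝ k (F n))
    (hconv : TendstoUniformlyOn F f atTop (Icc (0:ℝ) 1))
    (hconv' : TendstoUniformlyOn (fun n => iteratedDeriv k (F n)) g atTop (Icc (0:ℝ) 1)) :
    ContDiffOn ℝ k f (Icc (0:ℝ) 1) ∧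
      EqOn (iteratedDerivWithin k f (Icc (0:ℝ) 1)) g (Icc (0:ℝ) 1) := by
  choose P hPdeg hPderiv using fun n =>
    exists_degree_lt_eval_iterate_derivative_eq (fun m => iteratedDeriv m (F n) 0) k 0
  set G : ℕ → ℝ → ℝ := fun n x => F n x - (P n).eval x
  have hG : ∀ n, ContDiff ℝ k (G n) := fun n => (hF n).sub ((P n).contDiff_eval k)
  have hG_iteratedDeriv : ∀ n, ∀ m ≤ k, iteratedDeriv m (G n) =
      fun x => iteratedDeriv m (F n) x - (derivative^[m] (P n)).eval x := fun n m hm => by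
    ext x
    rw [iteratedDeriv_fun_sub ((hF n).contDiffAt.of_le (by exact_mod_cast hm))
      ((P n).contDiff_eval m).contDiffAt, iteratedDeriv_eval]
  obtain ⟨h, hh, hGh, hhg⟩ :=
    exists_contDiff_tendstoUniformlyOn_of_iteratedDeriv zero_le_one k hG
    (fun n m hm => by rw [hG_iteratedDeriv n m hm.le]; exact sub_eq_zero.2 (hPderiv n m hm).symm)
    (by simpa [hG_iteratedDeriv _ k le_rfl, iterate_derivative_eq_zero_of_degree_lt (hPdeg _)])
  obtain ⟨q, hq, hfq⟩ := exists_eqOn_eval_of_tendsto hPdeg (Icc_infinite zero_lt_one)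
    (φ := f - h) fun x hx => by
      simpa [G] using (hconv.tendsto_at hx).sub (hGh.tendsto_at hx)
  have hf : EqOn f (h + fun x => q.eval x) (Icc 0 1) := fun x hx => by
    simpa [sub_eq_iff_eq_add'] using hfq hx
  have hhq : ContDiff ℝ k (h + fun x => q.eval x) := hh.add (q.contDiff_eval k)
  refine ⟨hhq.contDiffOn.congr hf, fun x hx => ?_⟩
  rw [iteratedDerivWithin_congr hf hx,
    iteratedDerivWithin_eq_iteratedDeriv (uniqueDiffOn_Icc zero_lt_one) hhq.contDiffAt hx,
    iteratedDeriv_add hh.contDiffAt (q.contDiff_eval k).contDiffAt,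
    iteratedDeriv_eval_of_degree_lt hq, Pi.zero_apply, add_zero]
  exact hhg hx
end

section
/- Let C be a strictly hyperbolic C^{1+γ} Cantor set with contraction bound β < 1 and bounded distortion constant K. Then for every y = (…y_{−2}y_{−1}) in the dual Cantor set Σ^− = {0,1}^{−ℕ}, the ratio-geometry vectors R_n(y) = (|I_{y_{−n}…y_{−1}0}|, |G_{y_{−n}…y_{−1}}|, |I_{y_{−n}…y_{−1}1}|)/|I_{y_{−n}…y_{−1}}| satisfy: R(y) := lim_{n→∞} R_n(y) exists, with ‖R_n(y) − R(y)‖ = O(β^{nγ}) uniformly in y; moreover R takes values in the interior of the unit simplex Δ ⊆ ℝ^3 and is Hölder continuous of exponent γ with respect to the β-metric d_β(y,w) = β^{max{n : y_{−n}…y_{−1} = w_{−n}…w_{−1}}}. -/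
/-!
Write `g_n = φ_{y_{-n}} ∘ ⋯ ∘ φ_{y_{-1}}`. Every entry of `R_n(y)` is a relative length
`(g_n t - g_n s) / (g_n 1 - g_n 0)` for fixed `0 ≤ s ≤ t ≤ 1`. Passing from `n` to `n + 1` applies
one more branch `φ` to the interval `g_n [0,1]`, of length at most `β^n`; by the mean value theorem
this multiplies each relative length by a quotient `Dφ(ξ) / Dφ(η)` with `|ξ - η| ≤ β^n`, which is
`1 + O(β^{nγ})` because `Dφ` is `γ`-Hölder and bounded below by `α`. So `R_n(y)` is Cauchy at
the geometric rate `β^γ`, uniformly in `y`; the multipliers are at least `exp (-(c/α) β^{nγ})`,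
whose product stays bounded away from `0`, which keeps the limit inside the open simplex; and since
`R_n(y)` only depends on `y_{-n}, …, y_{-1}`, the uniform rate is also the Hölder bound.
-/

open Set

/-- The nested interval `I_{w_0…w_n} = φ_{w_0}(φ_{w_1}(⋯ φ_{w_n}([0,1])))`. -/
def cyl (φ : Bool → ℝ → ℝ) : List Bool → Set ℝ
  | [] => Icc (0:ℝ) 1
  | b :: l => φ b '' cyl φ l

/-- The ratio geometry vector
`R_n(y) = (|I_{y_{-n}…y_{-1}0}|, |G_{y_{-n}…y_{-1}}|, |I_{y_{-n}…y_{-1}1}|)/|I_{y_{-n}…y_{-1}}|`,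
where `y : ℕ → Bool` codes the past, `y k` being the coordinate `y_{-(k+1)}`. -/
noncomputable def ratioGeom (φ : Bool → ℝ → ℝ) (y : ℕ → Bool) (n : ℕ) : ℝ × ℝ × ℝ :=
  let w := (List.ofFn fun i : Fin n => y i).reverse
  let T := Metric.diam (cyl φ w)
  let L := Metric.diam (cyl φ (w ++ [false]))
  let Rr := Metric.diam (cyl φ (w ++ [true]))
  (L / T, (T - L - Rr) / T, Rr / T)

open Filter Topology Real

namespace HyperbolicCantor

structure IsHyperbolicBranch (α β γ c : ℝ) (ψ : ℝ → ℝ) : Prop where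
  differentiable : Differentiable ℝ ψ
  mapsTo : MapsTo ψ (Icc 0 1) (Icc 0 1)
  lt_deriv : ∀ x ∈ Icc (0 : ℝ) 1, α < deriv ψ x
  deriv_lt : ∀ x ∈ Icc (0 : ℝ) 1, deriv ψ x < β
  abs_deriv_sub_le : ∀ x ∈ Icc (0 : ℝ) 1, ∀ z ∈ Icc (0 : ℝ) 1,
    |deriv ψ x - deriv ψ z| ≤ c * |x - z| ^ γ

structure IsCantorSystem (α β γ c : ℝ) (φ : Bool → ℝ → ℝ) : Prop where
  branch : ∀ b, IsHyperbolicBranch α β γ c (φ b)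
  map_false_zero : φ false 0 = 0
  map_true_one : φ true 1 = 1
  gap : φ false 1 < φ true 0

lemma abs_div_sub_one_le {α T D D' : ℝ} (hα : 0 < α) (hD : α ≤ D) (h : |D' - D| ≤ α * T) :
    |D' / D - 1| ≤ T := by
  have hD0 : 0 < D := hα.trans_le hD
  have hT : 0 ≤ T := nonneg_of_mul_nonneg_right ((abs_nonneg _).trans h) hα
  rw [div_sub_one hD0.ne', abs_div, abs_of_pos hD0, div_le_iff₀ hD0]
  nlinarith

lemma exp_neg_le_div {α T D D' : ℝ} (hα : 0 < α) (hD : 0 < D) (hD' : α ≤ D')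
    (h : |D' - D| ≤ α * T) : exp (-T) ≤ D' / D := by
  have hT : 0 ≤ T := nonneg_of_mul_nonneg_right ((abs_nonneg _).trans h) hα
  have hD_le : D ≤ exp T * D' :=
    calc D ≤ D' + α * T := by linarith [neg_abs_le (D' - D)]
      _ ≤ (1 + T) * D' := by nlinarith
      _ ≤ exp T * D' := by gcongr <;> linarith [add_one_le_exp T]
  rwa [le_div_iff₀ hD, exp_neg, inv_mul_le_iff₀ (exp_pos T)]

lemma exp_neg_sum_mul_le {u a : ℕ → ℝ} (hu : ∀ n, exp (-a n) * u n ≤ u (n + 1)) (n : ℕ) :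
    exp (-∑ k ∈ Finset.range n, a k) * u 0 ≤ u n := by
  induction n with
  | zero => simp
  | succ n ih =>
    calc exp (-∑ k ∈ Finset.range (n + 1), a k) * u 0
        = exp (-a n) * (exp (-∑ k ∈ Finset.range n, a k) * u 0) := by
          rw [Finset.sum_range_succ, ← mul_assoc, ← exp_add]
          ring_nf
      _ ≤ exp (-a n) * u n := by gcongr
      _ ≤ u (n + 1) := hu n

lemma exists_mem_Icc_sub_eq_deriv_mul {ψ : ℝ → ℝ} (hψ : Differentiable ℝ ψ) {u v : ℝ}
    (huv : u ≤ v) : ∃ ξ ∈ Icc u v, ψ v - ψ u = deriv ψ ξ * (v - u) := by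
  rcases huv.eq_or_lt with rfl | huv
  · exact ⟨u, left_mem_Icc.2 le_rfl, by simp⟩
  · obtain ⟨ξ, hξ, hslope⟩ :=
      exists_deriv_eq_slope ψ huv hψ.continuous.continuousOn hψ.differentiableOn
    exact ⟨ξ, Ioo_subset_Icc_self hξ, by rw [hslope, div_mul_cancel₀ _ (sub_ne_zero.2 huv.ne')]⟩

lemma diam_image_Icc {h : ℝ → ℝ} {s t : ℝ} (hst : s ≤ t) (hc : ContinuousOn h (Icc s t))
    (hm : MonotoneOn h (Icc s t)) : Metric.diam (h '' Icc s t) = h t - h s := by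
  rw [hc.image_Icc_of_monotoneOn hst hm,
    Real.diam_Icc (hm (left_mem_Icc.2 hst) (right_mem_Icc.2 hst) hst)]

namespace IsHyperbolicBranch

variable {α β γ c : ℝ} {ψ : ℝ → ℝ}

lemma lt (hψ : IsHyperbolicBranch α β γ c ψ) : α < β :=
  (hψ.lt_deriv 0 (left_mem_Icc.2 zero_le_one)).trans (hψ.deriv_lt 0 (left_mem_Icc.2 zero_le_one))

lemma strictMonoOn (hψ : IsHyperbolicBranch α β γ c ψ) (hα : 0 ≤ α) :
    StrictMonoOn ψ (Icc 0 1) :=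
  strictMonoOn_of_deriv_pos (convex_Icc 0 1) hψ.differentiable.continuous.continuousOn
    fun x hx => hα.trans_lt (hψ.lt_deriv x (interior_subset hx))

lemma sub_le_mul_sub (hψ : IsHyperbolicBranch α β γ c ψ) {x z : ℝ} (hx : 0 ≤ x) (hxz : x ≤ z)
    (hz : z ≤ 1) : ψ z - ψ x ≤ β * (z - x) := by
  obtain ⟨ξ, hξ, h⟩ := exists_mem_Icc_sub_eq_deriv_mul hψ.differentiable hxz
  rw [h]
  exact mul_le_mul_of_nonneg_right (hψ.deriv_lt ξ ⟨hx.trans hξ.1, hξ.2.trans hz⟩).le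
    (sub_nonneg.2 hxz)

lemma exists_ratio_eq_mul (hψ : IsHyperbolicBranch α β γ c ψ) (hα : 0 < α) (hγ : 0 ≤ γ)
    (hc : 0 ≤ c) {a u v b : ℝ} (ha : 0 ≤ a) (hau : a ≤ u) (huv : u ≤ v) (hvb : v ≤ b)
    (hb : b ≤ 1) (hab : a < b) :
    ∃ κ, |κ - 1| ≤ c / α * (b - a) ^ γ ∧ exp (-(c / α * (b - a) ^ γ)) ≤ κ ∧
      (ψ v - ψ u) / (ψ b - ψ a) = κ * ((v - u) / (b - a)) := by
  obtain ⟨ξ, hξ, hξeq⟩ := exists_mem_Icc_sub_eq_deriv_mul hψ.differentiable huv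
  obtain ⟨η, hη, hηeq⟩ := exists_mem_Icc_sub_eq_deriv_mul hψ.differentiable hab.le
  have hξ01 : ξ ∈ Icc (0 : ℝ) 1 := ⟨by linarith [hξ.1], by linarith [hξ.2]⟩
  have hη01 : η ∈ Icc (0 : ℝ) 1 := ⟨ha.trans hη.1, hη.2.trans hb⟩
  have hαη := hψ.lt_deriv η hη01
  have hholder : |deriv ψ ξ - deriv ψ η| ≤ α * (c / α * (b - a) ^ γ) :=
    calc |deriv ψ ξ - deriv ψ η| ≤ c * |ξ - η| ^ γ := hψ.abs_deriv_sub_le ξ hξ01 η hη01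
      _ ≤ c * (b - a) ^ γ := by
        gcongr
        exact abs_sub_le_iff.2 ⟨by linarith [hξ.2, hη.1], by linarith [hξ.1, hη.2]⟩
      _ = α * (c / α * (b - a) ^ γ) := by field_simp
  have hη0 : deriv ψ η ≠ 0 := (hα.trans hαη).ne'
  have hba : b - a ≠ 0 := (sub_pos.2 hab).ne'
  refine ⟨deriv ψ ξ / deriv ψ η, abs_div_sub_one_le hα hαη.le hholder,
    exp_neg_le_div hα (hα.trans hαη) (hψ.lt_deriv ξ hξ01).le hholder, ?_⟩
  rw [hξeq, hηeq]
  field_simp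

end IsHyperbolicBranch

def compSeq (f : ℕ → ℝ → ℝ) : ℕ → ℝ → ℝ
  | 0 => id
  | n + 1 => f n ∘ compSeq f n

noncomputable def relLength (g : ℝ → ℝ) (s t : ℝ) : ℝ := (g t - g s) / (g 1 - g 0)

section compSeq

variable {f : ℕ → ℝ → ℝ}

lemma mapsTo_compSeq (hf : ∀ k, MapsTo (f k) (Icc 0 1) (Icc 0 1)) :
    ∀ n, MapsTo (compSeq f n) (Icc 0 1) (Icc 0 1)
  | 0 => mapsTo_id _
  | n + 1 => (hf n).comp (mapsTo_compSeq hf n)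

lemma strictMonoOn_compSeq (hf : ∀ k, MapsTo (f k) (Icc 0 1) (Icc 0 1))
    (hmono : ∀ k, StrictMonoOn (f k) (Icc 0 1)) : ∀ n, StrictMonoOn (compSeq f n) (Icc 0 1)
  | 0 => strictMono_id.strictMonoOn _
  | n + 1 => (hmono n).comp (strictMonoOn_compSeq hf hmono n) (mapsTo_compSeq hf n)

lemma continuous_compSeq (hf : ∀ k, Continuous (f k)) : ∀ n, Continuous (compSeq f n)
  | 0 => continuous_id
  | n + 1 => (hf n).comp (continuous_compSeq hf n)

variable {α β γ c : ℝ}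

lemma compSeq_one_sub_compSeq_zero_le (hf : ∀ k, IsHyperbolicBranch α β γ c (f k))
    (hα : 0 ≤ α) (n : ℕ) : compSeq f n 1 - compSeq f n 0 ≤ β ^ n := by
  have hmaps := mapsTo_compSeq (fun k => (hf k).mapsTo)
  have hmono := strictMonoOn_compSeq (fun k => (hf k).mapsTo) (fun k => (hf k).strictMonoOn hα)
  induction n with
  | zero => simp [compSeq]
  | succ n ih =>
    calc f n (compSeq f n 1) - f n (compSeq f n 0) ≤ β * (compSeq f n 1 - compSeq f n 0) :=
          (hf n).sub_le_mul_sub (hmaps n (left_mem_Icc.2 zero_le_one)).1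
            (hmono n (left_mem_Icc.2 zero_le_one) (right_mem_Icc.2 zero_le_one) zero_lt_one).le
            (hmaps n (right_mem_Icc.2 zero_le_one)).2
      _ ≤ β * β ^ n := by gcongr; linarith [(hf 0).lt]
      _ = β ^ (n + 1) := by ring

lemma relLength_compSeq_mem_Icc (hf : ∀ k, IsHyperbolicBranch α β γ c (f k)) (hα : 0 ≤ α)
    {s t : ℝ} (hs : 0 ≤ s) (hst : s ≤ t) (ht : t ≤ 1) (n : ℕ) :
    relLength (compSeq f n) s t ∈ Icc 0 1 := by
  have hmono := strictMonoOn_compSeq (fun k => (hf k).mapsTo) (fun k => (hf k).strictMonoOn hα) n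
  have h0 : (0 : ℝ) ∈ Icc (0 : ℝ) 1 := left_mem_Icc.2 zero_le_one
  have h1 : (1 : ℝ) ∈ Icc (0 : ℝ) 1 := right_mem_Icc.2 zero_le_one
  have hs' : s ∈ Icc (0 : ℝ) 1 := ⟨hs, hst.trans ht⟩
  have ht' : t ∈ Icc (0 : ℝ) 1 := ⟨hs.trans hst, ht⟩
  have hpos : 0 < compSeq f n 1 - compSeq f n 0 := sub_pos.2 (hmono h0 h1 zero_lt_one)
  refine ⟨div_nonneg (sub_nonneg.2 (hmono.monotoneOn hs' ht' hst)) hpos.le,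
    (div_le_one hpos).2 ?_⟩
  linarith [hmono.monotoneOn h0 hs' hs, hmono.monotoneOn ht' h1 ht]

lemma exists_relLength_compSeq_succ_eq_mul (hf : ∀ k, IsHyperbolicBranch α β γ c (f k))
    (hα : 0 < α) (hγ : 0 ≤ γ) (hc : 0 ≤ c) {s t : ℝ} (hs : 0 ≤ s) (hst : s ≤ t) (ht : t ≤ 1)
    (n : ℕ) :
    ∃ κ, |κ - 1| ≤ c / α * (β ^ γ) ^ n ∧ exp (-(c / α * (β ^ γ) ^ n)) ≤ κ ∧
      relLength (compSeq f (n + 1)) s t = κ * relLength (compSeq f n) s t := by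
  have hmaps := mapsTo_compSeq (fun k => (hf k).mapsTo) n
  have hmono :=
    strictMonoOn_compSeq (fun k => (hf k).mapsTo) (fun k => (hf k).strictMonoOn hα.le) n
  have h0 : (0 : ℝ) ∈ Icc (0 : ℝ) 1 := left_mem_Icc.2 zero_le_one
  have h1 : (1 : ℝ) ∈ Icc (0 : ℝ) 1 := right_mem_Icc.2 zero_le_one
  have hs' : s ∈ Icc (0 : ℝ) 1 := ⟨hs, hst.trans ht⟩
  have ht' : t ∈ Icc (0 : ℝ) 1 := ⟨hs.trans hst, ht⟩
  have hlt := hmono h0 h1 zero_lt_one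
  have hT : c / α * (compSeq f n 1 - compSeq f n 0) ^ γ ≤ c / α * (β ^ γ) ^ n := by
    rw [rpow_pow_comm (hα.le.trans (hf 0).lt.le)]
    gcongr
    exact compSeq_one_sub_compSeq_zero_le hf hα.le n
  obtain ⟨κ, hκ1, hκexp, hκ⟩ := (hf n).exists_ratio_eq_mul hα hγ hc (hmaps h0).1
    (hmono.monotoneOn h0 hs' hs) (hmono.monotoneOn hs' ht' hst) (hmono.monotoneOn ht' h1 ht)
    (hmaps h1).2 hlt
  exact ⟨κ, hκ1.trans hT, (exp_le_exp.2 (neg_le_neg hT)).trans hκexp, hκ⟩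

lemma abs_relLength_compSeq_succ_sub_le (hf : ∀ k, IsHyperbolicBranch α β γ c (f k))
    (hα : 0 < α) (hγ : 0 ≤ γ) (hc : 0 ≤ c) {s t : ℝ} (hs : 0 ≤ s) (hst : s ≤ t) (ht : t ≤ 1)
    (n : ℕ) :
    |relLength (compSeq f (n + 1)) s t - relLength (compSeq f n) s t| ≤ c / α * (β ^ γ) ^ n := by
  obtain ⟨κ, hκ1, -, hκ⟩ := exists_relLength_compSeq_succ_eq_mul hf hα hγ hc hs hst ht n
  obtain ⟨h0, h1⟩ := relLength_compSeq_mem_Icc hf hα.le hs hst ht n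
  rw [hκ, ← sub_one_mul, abs_mul, abs_of_nonneg h0]
  exact (mul_le_of_le_one_right (abs_nonneg _) h1).trans hκ1

lemma exp_neg_mul_le_relLength_compSeq (hf : ∀ k, IsHyperbolicBranch α β γ c (f k))
    (hα : 0 < α) (hγ : 0 ≤ γ) (hc : 0 ≤ c) (hq : β ^ γ < 1) {s t : ℝ} (hs : 0 ≤ s) (hst : s ≤ t)
    (ht : t ≤ 1) (n : ℕ) :
    exp (-(c / α / (1 - β ^ γ))) * (t - s) ≤ relLength (compSeq f n) s t := by
  have hstep : ∀ k, exp (-(c / α * (β ^ γ) ^ k)) * relLength (compSeq f k) s t ≤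
      relLength (compSeq f (k + 1)) s t := by
    intro k
    obtain ⟨κ, -, hκ, hκeq⟩ := exists_relLength_compSeq_succ_eq_mul hf hα hγ hc hs hst ht k
    rw [hκeq]
    exact mul_le_mul_of_nonneg_right hκ (relLength_compSeq_mem_Icc hf hα.le hs hst ht k).1
  have hgeom : ∑ k ∈ Finset.range n, (β ^ γ) ^ k ≤ 1 / (1 - β ^ γ) := by
    simpa using geom_sum_Ico_le_of_lt_one (m := 0) (n := n)
      (rpow_nonneg (hα.le.trans (hf 0).lt.le) γ) hq
  calc exp (-(c / α / (1 - β ^ γ))) * (t - s)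
      ≤ exp (-∑ k ∈ Finset.range n, c / α * (β ^ γ) ^ k) * (t - s) := by
        rw [← Finset.mul_sum, ← mul_one_div (c / α)]
        gcongr
    _ = exp (-∑ k ∈ Finset.range n, c / α * (β ^ γ) ^ k) * relLength (compSeq f 0) s t := by
        simp [relLength, compSeq]
    _ ≤ relLength (compSeq f n) s t := exp_neg_sum_mul_le hstep n

end compSeq

lemma cyl_ofFn_reverse_append (φ : Bool → ℝ → ℝ) (y : ℕ → Bool) (n : ℕ) (l : List Bool) :
    cyl φ ((List.ofFn fun i : Fin n => y i).reverse ++ l) = compSeq (φ ∘ y) n '' cyl φ l := by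
  induction n with
  | zero => simp [compSeq]
  | succ n ih =>
    rw [List.ofFn_succ', List.concat_eq_append, List.reverse_append]
    simp only [Fin.val_castSucc, Fin.val_last, List.reverse_singleton, List.cons_append,
      List.nil_append]
    rw [cyl, ih, compSeq, image_comp]
    rfl

section ratioGeom

variable {φ : Bool → ℝ → ℝ} {α β γ c : ℝ}

lemma ratioGeom_eq (hφ : ∀ b, IsHyperbolicBranch α β γ c (φ b)) (hα : 0 ≤ α)
    (h0 : φ false 0 = 0) (h1 : φ true 1 = 1) (y : ℕ → Bool) (n : ℕ) :
    ratioGeom φ y n = (relLength (compSeq (φ ∘ y) n) 0 (φ false 1),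
      relLength (compSeq (φ ∘ y) n) (φ false 1) (φ true 0),
      relLength (compSeq (φ ∘ y) n) (φ true 0) 1) := by
  set g := compSeq (φ ∘ y) n
  have hdiam : ∀ s t : ℝ, 0 ≤ s → s ≤ t → t ≤ 1 → Metric.diam (g '' Icc s t) = g t - g s :=
    fun s t hs hst ht => diam_image_Icc hst
      (continuous_compSeq (fun k => (hφ (y k)).differentiable.continuous) n).continuousOn
      ((strictMonoOn_compSeq (fun k => (hφ (y k)).mapsTo)
        (fun k => (hφ (y k)).strictMonoOn hα) n).monotoneOn.mono (Icc_subset_Icc hs ht))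
  have hcyl : ∀ b, cyl φ [b] = Icc (φ b 0) (φ b 1) := fun b =>
    (hφ b).differentiable.continuous.continuousOn.image_Icc_of_monotoneOn zero_le_one
      ((hφ b).strictMonoOn hα).monotoneOn
  have hp01 : φ false 1 ∈ Icc (0 : ℝ) 1 := (hφ false).mapsTo (right_mem_Icc.2 zero_le_one)
  have hq01 : φ true 0 ∈ Icc (0 : ℝ) 1 := (hφ true).mapsTo (left_mem_Icc.2 zero_le_one)
  have hT : Metric.diam (cyl φ (List.ofFn fun i : Fin n => y i).reverse) = g 1 - g 0 := by
    have := cyl_ofFn_reverse_append φ y n []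
    rw [List.append_nil] at this
    rw [this]
    exact hdiam 0 1 le_rfl zero_le_one le_rfl
  have hL : Metric.diam (cyl φ ((List.ofFn fun i : Fin n => y i).reverse ++ [false])) =
      g (φ false 1) - g 0 := by
    rw [cyl_ofFn_reverse_append, hcyl, h0]
    exact hdiam _ _ le_rfl hp01.1 hp01.2
  have hR : Metric.diam (cyl φ ((List.ofFn fun i : Fin n => y i).reverse ++ [true])) =
      g 1 - g (φ true 0) := by
    rw [cyl_ofFn_reverse_append, hcyl, h1]
    exact hdiam _ _ hq01.1 hq01.2 le_rfl
  simp only [ratioGeom, hT, hL, hR, relLength]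
  congr 2
  ring

lemma ratioGeom_sum (hφ : ∀ b, IsHyperbolicBranch α β γ c (φ b)) (hα : 0 ≤ α)
    (h0 : φ false 0 = 0) (h1 : φ true 1 = 1) (y : ℕ → Bool) (n : ℕ) :
    (ratioGeom φ y n).1 + (ratioGeom φ y n).2.1 + (ratioGeom φ y n).2.2 = 1 := by
  have hlt : compSeq (φ ∘ y) n 0 < compSeq (φ ∘ y) n 1 :=
    strictMonoOn_compSeq (fun k => (hφ (y k)).mapsTo) (fun k => (hφ (y k)).strictMonoOn hα) n
      (left_mem_Icc.2 zero_le_one) (right_mem_Icc.2 zero_le_one) zero_lt_one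
  rw [ratioGeom_eq hφ hα h0 h1]
  simp only [relLength]
  field_simp [(sub_pos.2 hlt).ne']
  ring

lemma ratioGeom_congr {y w : ℕ → Bool} {n : ℕ} (h : ∀ i < n, y i = w i) :
    ratioGeom φ y n = ratioGeom φ w n := by
  have hw : (fun i : Fin n => y i) = fun i : Fin n => w i := funext fun i => h i i.2
  simp only [ratioGeom, hw]

end ratioGeom

noncomputable def scalingFunction (φ : Bool → ℝ → ℝ) (y : ℕ → Bool) : ℝ × ℝ × ℝ :=
  limUnder atTop (ratioGeom φ y)

def openSimplex : Set (ℝ × ℝ × ℝ) :=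
  {x | 0 < x.1 ∧ 0 < x.2.1 ∧ 0 < x.2.2 ∧ x.1 + x.2.1 + x.2.2 = 1}

namespace IsCantorSystem

variable {φ : Bool → ℝ → ℝ} {α β γ c : ℝ}

lemma dist_ratioGeom_succ_le (hφ : IsCantorSystem α β γ c φ) (hα : 0 < α) (hγ : 0 ≤ γ)
    (hc : 0 ≤ c) (y : ℕ → Bool) (n : ℕ) :
    dist (ratioGeom φ y n) (ratioGeom φ y (n + 1)) ≤ c / α * (β ^ γ) ^ n := by
  have hp01 : φ false 1 ∈ Icc (0 : ℝ) 1 := (hφ.branch false).mapsTo (right_mem_Icc.2 zero_le_one)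
  have hq01 : φ true 0 ∈ Icc (0 : ℝ) 1 := (hφ.branch true).mapsTo (left_mem_Icc.2 zero_le_one)
  have hrel : ∀ s t : ℝ, 0 ≤ s → s ≤ t → t ≤ 1 → dist (relLength (compSeq (φ ∘ y) n) s t)
      (relLength (compSeq (φ ∘ y) (n + 1)) s t) ≤ c / α * (β ^ γ) ^ n := by
    intro s t hs hst ht
    rw [dist_comm, Real.dist_eq]
    exact abs_relLength_compSeq_succ_sub_le (f := φ ∘ y) (fun k => hφ.branch (y k)) hα hγ hc
      hs hst ht n
  rw [ratioGeom_eq hφ.branch hα.le hφ.map_false_zero hφ.map_true_one,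
    ratioGeom_eq hφ.branch hα.le hφ.map_false_zero hφ.map_true_one, Prod.dist_eq, Prod.dist_eq]
  exact max_le (hrel _ _ le_rfl hp01.1 hp01.2)
    (max_le (hrel _ _ hp01.1 hφ.gap.le hq01.2) (hrel _ _ hq01.1 hq01.2 le_rfl))

lemma exp_smul_le_ratioGeom (hφ : IsCantorSystem α β γ c φ) (hα : 0 < α) (hγ : 0 ≤ γ)
    (hc : 0 ≤ c) (hq : β ^ γ < 1) (y : ℕ → Bool) (n : ℕ) :
    exp (-(c / α / (1 - β ^ γ))) • (φ false 1, φ true 0 - φ false 1, 1 - φ true 0) ≤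
      ratioGeom φ y n := by
  have hp01 : φ false 1 ∈ Icc (0 : ℝ) 1 := (hφ.branch false).mapsTo (right_mem_Icc.2 zero_le_one)
  have hq01 : φ true 0 ∈ Icc (0 : ℝ) 1 := (hφ.branch true).mapsTo (left_mem_Icc.2 zero_le_one)
  have hrel := fun (s t : ℝ) (hs : 0 ≤ s) (hst : s ≤ t) (ht : t ≤ 1) =>
    exp_neg_mul_le_relLength_compSeq (f := φ ∘ y) (fun k => hφ.branch (y k)) hα hγ hc hq hs hst ht n
  rw [ratioGeom_eq hφ.branch hα.le hφ.map_false_zero hφ.map_true_one]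
  simp only [Prod.smul_mk, smul_eq_mul, Prod.mk_le_mk]
  exact ⟨by simpa using hrel _ _ le_rfl hp01.1 hp01.2, hrel _ _ hp01.1 hφ.gap.le hq01.2,
    hrel _ _ hq01.1 hq01.2 le_rfl⟩

lemma tendsto_ratioGeom (hφ : IsCantorSystem α β γ c φ) (hα : 0 < α) (hγ : 0 ≤ γ)
    (hc : 0 ≤ c) (hq : β ^ γ < 1) (y : ℕ → Bool) :
    Tendsto (ratioGeom φ y) atTop (𝓝 (scalingFunction φ y)) :=
  (cauchySeq_of_le_geometric _ _ hq (hφ.dist_ratioGeom_succ_le hα hγ hc y)).tendsto_limUnder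

lemma dist_ratioGeom_scalingFunction_le (hφ : IsCantorSystem α β γ c φ) (hα : 0 < α)
    (hγ : 0 ≤ γ) (hc : 0 ≤ c) (hq : β ^ γ < 1) (y : ℕ → Bool) (n : ℕ) :
    dist (ratioGeom φ y n) (scalingFunction φ y) ≤ c / α / (1 - β ^ γ) * (β ^ γ) ^ n :=
  (dist_le_of_le_geometric_of_tendsto _ _ hq (hφ.dist_ratioGeom_succ_le hα hγ hc y)
    (hφ.tendsto_ratioGeom hα hγ hc hq y) n).trans_eq (by ring)

lemma scalingFunction_mem_openSimplex (hφ : IsCantorSystem α β γ c φ) (hα : 0 < α)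
    (hγ : 0 ≤ γ) (hc : 0 ≤ c) (hq : β ^ γ < 1) (y : ℕ → Bool) :
    scalingFunction φ y ∈ openSimplex := by
  set m := exp (-(c / α / (1 - β ^ γ))) • (φ false 1, φ true 0 - φ false 1, 1 - φ true 0)
  have hp : 0 < φ false 1 := by
    simpa [hφ.map_false_zero] using (hφ.branch false).strictMonoOn hα.le
      (left_mem_Icc.2 zero_le_one) (right_mem_Icc.2 zero_le_one) zero_lt_one
  have hq1 : φ true 0 < 1 := by
    simpa [hφ.map_true_one] using (hφ.branch true).strictMonoOn hα.le
      (left_mem_Icc.2 zero_le_one) (right_mem_Icc.2 zero_le_one) zero_lt_one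
  have hm : 0 < m.1 ∧ 0 < m.2.1 ∧ 0 < m.2.2 := by
    simp only [m, Prod.smul_mk, smul_eq_mul]
    exact ⟨by positivity, mul_pos (exp_pos _) (sub_pos.2 hφ.gap),
      mul_pos (exp_pos _) (sub_pos.2 hq1)⟩
  have hclosed : IsClosed (Ici m ∩ {x : ℝ × ℝ × ℝ | x.1 + x.2.1 + x.2.2 = 1}) :=
    isClosed_Ici.inter (isClosed_eq (by fun_prop) continuous_const)
  obtain ⟨hle, hsum⟩ := hclosed.mem_of_tendsto (hφ.tendsto_ratioGeom hα hγ hc hq y)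
    (Eventually.of_forall fun n => ⟨hφ.exp_smul_le_ratioGeom hα hγ hc hq y n,
      ratioGeom_sum hφ.branch hα.le hφ.map_false_zero hφ.map_true_one y n⟩)
  exact ⟨hm.1.trans_le hle.1, hm.2.1.trans_le hle.2.1, hm.2.2.trans_le hle.2.2, hsum⟩

lemma dist_scalingFunction_le (hφ : IsCantorSystem α β γ c φ) (hα : 0 < α) (hγ : 0 ≤ γ)
    (hc : 0 ≤ c) (hq : β ^ γ < 1) {y w : ℕ → Bool} {n : ℕ} (h : ∀ i < n, y i = w i) :
    dist (scalingFunction φ y) (scalingFunction φ w) ≤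
      2 * (c / α / (1 - β ^ γ)) * (β ^ γ) ^ n := by
  calc dist (scalingFunction φ y) (scalingFunction φ w)
      ≤ dist (ratioGeom φ y n) (scalingFunction φ y) +
          dist (ratioGeom φ w n) (scalingFunction φ w) := by
        rw [← ratioGeom_congr h]
        exact dist_triangle_left _ _ _
    _ ≤ 2 * (c / α / (1 - β ^ γ)) * (β ^ γ) ^ n := by
        linarith [hφ.dist_ratioGeom_scalingFunction_le hα hγ hc hq y n,
          hφ.dist_ratioGeom_scalingFunction_le hα hγ hc hq w n]

end IsCantorSystem

end HyperbolicCantor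

open HyperbolicCantor

theorem stmt13_general (φ : Bool → ℝ → ℝ) (α β γ c : ℝ)
    (hα : 0 < α) (hβ : β < 1) (hγ : 0 < γ) (hc : 0 < c)
    (hφdiff : ∀ b, ContDiff ℝ 1 (φ b))
    (hφmaps : ∀ b, MapsTo (φ b) (Icc (0:ℝ) 1) (Icc (0:ℝ) 1))
    (hderiv : ∀ b, ∀ x ∈ Icc (0:ℝ) 1, α < deriv (φ b) x ∧ deriv (φ b) x < β)
    (hHolder : ∀ b, ∀ x ∈ Icc (0:ℝ) 1, ∀ z ∈ Icc (0:ℝ) 1,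
      |deriv (φ b) x - deriv (φ b) z| ≤ c * |x - z| ^ γ)
    (h00 : φ false 0 = 0) (h11 : φ true 1 = 1)
    (hgap : φ false 1 < φ true 0) :
    ∃ R : (ℕ → Bool) → ℝ × ℝ × ℝ, ∃ Cst : ℝ, 0 < Cst ∧
      -- convergence `R_n(y) → R(y)` at rate `O(β^{nγ})`, uniformly in `y`
      (∀ (y : ℕ → Bool) (n : ℕ), ‖ratioGeom φ y n - R y‖ ≤ Cst * (β ^ γ) ^ n) ∧
      -- `R` takes values in the interior of the unit simplex
      (∀ y : ℕ → Bool, 0 < (R y).1 ∧ 0 < (R y).2.1 ∧ 0 < (R y).2.2 ∧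
        (R y).1 + (R y).2.1 + (R y).2.2 = 1) ∧
      -- `R` is Hölder of exponent `γ` in the `β`-metric: if `y, w` agree in the
      -- `n` most recent past coordinates then `‖R y − R w‖ ≤ Cst (β^n)^γ`
      (∀ (y w : ℕ → Bool) (n : ℕ), (∀ i < n, y i = w i) →
        ‖R y - R w‖ ≤ Cst * ((β ^ n) ^ γ)) := by
  have hφ : IsCantorSystem α β γ c φ :=
    ⟨fun b => ⟨(hφdiff b).differentiable one_ne_zero, hφmaps b, fun x hx => (hderiv b x hx).1,
      fun x hx => (hderiv b x hx).2, hHolder b⟩, h00, h11, hgap⟩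
  have hβ0 : 0 < β := hα.trans (hφ.branch false).lt
  have hq : β ^ γ < 1 := rpow_lt_one hβ0.le hβ hγ
  have hC : 0 < c / α / (1 - β ^ γ) := div_pos (div_pos hc hα) (sub_pos.2 hq)
  refine ⟨scalingFunction φ, 2 * (c / α / (1 - β ^ γ)), by positivity, fun y n => ?_,
    hφ.scalingFunction_mem_openSimplex hα hγ.le hc.le hq, fun y w n h => ?_⟩
  · rw [← dist_eq_norm]
    refine (hφ.dist_ratioGeom_scalingFunction_le hα hγ.le hc.le hq y n).trans ?_
    gcongr
    linarith
  · rw [← rpow_pow_comm hβ0.le, ← dist_eq_norm]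
    exact hφ.dist_scalingFunction_le hα hγ.le hc.le hq h

/-- Sullivan's scaling function theorem for a strictly hyperbolic `C^{1+γ}` Cantor set. -/
theorem stmt13 (φ : Bool → ℝ → ℝ) (α β γ c : ℝ)
    (hα : 0 < α) (hβ : β < 1) (hγ : 0 < γ) (hγ1 : γ ≤ 1) (hc : 0 < c)
    (hφdiff : ∀ b, ContDiff ℝ 1 (φ b))
    (hφmaps : ∀ b, MapsTo (φ b) (Icc (0:ℝ) 1) (Icc (0:ℝ) 1))
    (hderiv : ∀ b, ∀ x ∈ Icc (0:ℝ) 1, α < deriv (φ b) x ∧ deriv (φ b) x < β)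
    (hHolder : ∀ b, ∀ x ∈ Icc (0:ℝ) 1, ∀ z ∈ Icc (0:ℝ) 1,
      |deriv (φ b) x - deriv (φ b) z| ≤ c * |x - z| ^ γ)
    (h00 : φ false 0 = 0) (h11 : φ true 1 = 1)
    (hgap : φ false 1 < φ true 0) :
    ∃ R : (ℕ → Bool) → ℝ × ℝ × ℝ, ∃ Cst : ℝ, 0 < Cst ∧
      -- convergence `R_n(y) → R(y)` at rate `O(β^{nγ})`, uniformly in `y`
      (∀ (y : ℕ → Bool) (n : ℕ), ‖ratioGeom φ y n - R y‖ ≤ Cst * (β ^ γ) ^ n) ∧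
      -- `R` takes values in the interior of the unit simplex
      (∀ y : ℕ → Bool, 0 < (R y).1 ∧ 0 < (R y).2.1 ∧ 0 < (R y).2.2 ∧
        (R y).1 + (R y).2.1 + (R y).2.2 = 1) ∧
      -- `R` is Hölder of exponent `γ` in the `β`-metric: if `y, w` agree in the
      -- `n` most recent past coordinates then `‖R y − R w‖ ≤ Cst (β^n)^γ`
      (∀ (y w : ℕ → Bool) (n : ℕ), (∀ i < n, y i = w i) →
        ‖R y - R w‖ ≤ Cst * ((β ^ n) ^ γ)) :=
  stmt13_general φ α β γ c hα hβ hγ hc hφdiff hφmaps hderiv hHolder h00 h11 hgap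
end
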